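/- Let q be a Boolean conjunctive query with m atoms, Dˣ a set of exogenous tuples with Dˣ ⊭ q, and Dⁿ a set of candidate missing endogenous tuples with Dˣ ∪ Dⁿ ⊨ q. If t ∈ Dⁿ is an actual Why-No cause for q, then there exists a contingency set Γ for t with |Γ| ≤ m − 1; consequently the minimum contingency size for t is at most m − 1 and the responsibility of t is at least 1/m. -/

import Mathlib

/-- An atom of a Boolean conjunctive query: a relation symbol applied to a
tuple (list) of variables, marked endogenous (`endo = true`) or exogenous. -/
structure DBAtom (Rel Var : Type) where
  rel : Rel
  args : List Var
  endo : Bool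
deriving DecidableEq

/-- A database tuple: it belongs to one relation and carries a tuple of constants. -/
structure DBTup (Rel Const : Type) where
  rel : Rel
  args : List Const
deriving DecidableEq

/-- The tuple obtained by applying a valuation `θ` to an atom. -/
def DBAtom.app {Rel Var Const : Type} (g : DBAtom Rel Var) (θ : Var → Const) :
    DBTup Rel Const :=
  ⟨g.rel, g.args.map θ⟩

/-- `dbSat D q` holds iff `D ⊨ q`: there is a valuation `θ` of the variables of `q`
into the domain with `θ(g) ∈ D` for every atom `g` of `q`. -/
def dbSat {Rel Var Const : Type} (D : Finset (DBTup Rel Const))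
    (q : Finset (DBAtom Rel Var)) : Prop :=
  ∃ θ : Var → Const, ∀ g ∈ q, g.app θ ∈ D

/-- `t` is an actual cause for `q` in `D` (with endogenous tuples `Dn`):
there is a contingency set `Γ ⊆ Dn` with `t ∉ Γ` such that
`D − Γ ⊨ q` and `D − Γ − {t} ⊭ q`. -/
def isActualCause {Rel Var Const : Type} [DecidableEq Rel] [DecidableEq Const]
    (q : Finset (DBAtom Rel Var)) (D Dn : Finset (DBTup Rel Const))
    (t : DBTup Rel Const) : Prop :=
  ∃ Γ : Finset (DBTup Rel Const), Γ ⊆ Dn ∧ t ∉ Γ ∧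
    dbSat (D \ Γ) q ∧ ¬ dbSat ((D \ Γ).erase t) q

/-- The n-lineage of `q` on `D`: the family of the sets `c^θ ∩ Dⁿ`
over all valuations `θ` with `θ(g) ∈ D` for all atoms `g` of `q`, where
`c^θ = {θ(g) : g an atom of q}`. -/
def nLineage {Rel Var Const : Type} [DecidableEq Rel] [DecidableEq Const]
    (q : Finset (DBAtom Rel Var)) (D Dn : Finset (DBTup Rel Const)) :
    Set (Finset (DBTup Rel Const)) :=
  {c | ∃ θ : Var → Const, (∀ g ∈ q, g.app θ ∈ D) ∧
    c = (q.image fun g => g.app θ) ∩ Dn}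

/-- `Γ` is a Why-No contingency set for `t`: `Γ ⊆ Dⁿ`, `t ∉ Γ`,
`Dˣ ∪ Γ ⊭ q` and `Dˣ ∪ Γ ∪ {t} ⊨ q`. -/
def isWhyNoContingency {Rel Var Const : Type} [DecidableEq Rel] [DecidableEq Const]
    (q : Finset (DBAtom Rel Var)) (Dx Dn : Finset (DBTup Rel Const))
    (t : DBTup Rel Const) (Γ : Finset (DBTup Rel Const)) : Prop :=
  Γ ⊆ Dn ∧ t ∉ Γ ∧ ¬ dbSat (Dx ∪ Γ) q ∧ dbSat (insert t (Dx ∪ Γ)) q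

/-! A contingency `Γ` for `t` comes with a valuation `θ` mapping `q` into `Dˣ ∪ Γ ∪ {t}`.
Only the tuples of `Γ` hit by `θ` are needed, and `t` itself is hit (otherwise already
`Dˣ ∪ Γ ⊨ q`), so at most `m − 1` tuples of `Γ` remain. -/

section WhyNo

variable {Rel Var Const : Type}

theorem dbSat_iff_exists_image_subset [DecidableEq Rel] [DecidableEq Const]
    {D : Finset (DBTup Rel Const)} {q : Finset (DBAtom Rel Var)} :
    dbSat D q ↔ ∃ θ : Var → Const, q.image (·.app θ) ⊆ D := by
  simp only [dbSat, Finset.image_subset_iff]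

theorem dbSat.mono {D D' : Finset (DBTup Rel Const)} {q : Finset (DBAtom Rel Var)}
    (hD : D ⊆ D') : dbSat D q → dbSat D' q
  | ⟨θ, hθ⟩ => ⟨θ, fun g hg => hD (hθ g hg)⟩

variable [DecidableEq Rel] [DecidableEq Const]

theorem isWhyNoContingency.exists_card_lt {q : Finset (DBAtom Rel Var)}
    {Dx Dn Γ : Finset (DBTup Rel Const)} {t : DBTup Rel Const}
    (hΓ : isWhyNoContingency q Dx Dn t Γ) :
    ∃ Γ', isWhyNoContingency q Dx Dn t Γ' ∧ Γ'.card < q.card := by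
  obtain ⟨hΓDn, htΓ, hunsat, hsat⟩ := hΓ
  obtain ⟨θ, hθ⟩ := dbSat_iff_exists_image_subset.mp hsat
  set c := q.image (·.app θ)
  have htc : t ∈ c := by
    by_contra htc
    exact hunsat (dbSat_iff_exists_image_subset.mpr
      ⟨θ, (Finset.subset_insert_iff_of_notMem htc).mp hθ⟩)
  have hsat' : c ⊆ insert t (Dx ∪ c ∩ Γ) := fun x hx => by
    have := hθ hx
    simp only [Finset.mem_insert, Finset.mem_union, Finset.mem_inter] at this ⊢
    tauto
  refine ⟨c ∩ Γ, ⟨fun x hx => hΓDn (Finset.mem_inter.mp hx).2,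
    fun ht => htΓ (Finset.mem_inter.mp ht).2,
    fun h => hunsat (h.mono (Finset.union_subset_union_right Finset.inter_subset_right)),
    dbSat_iff_exists_image_subset.mpr ⟨θ, hsat'⟩⟩, ?_⟩
  calc (c ∩ Γ).card < c.card := Finset.card_lt_card
        ⟨Finset.inter_subset_left, fun h => htΓ (Finset.mem_inter.mp (h htc)).2⟩
    _ ≤ q.card := Finset.card_image_le

end WhyNo

theorem statement3_general {Rel Var Const : Type}
    [DecidableEq Rel] [DecidableEq Const]
    (q : Finset (DBAtom Rel Var)) (Dx Dn : Finset (DBTup Rel Const))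
    (t : DBTup Rel Const)
    (hcause : ∃ Γ, isWhyNoContingency q Dx Dn t Γ) :
    (∃ Γ, isWhyNoContingency q Dx Dn t Γ ∧ Γ.card ≤ q.card - 1) ∧
    sInf {n : ℕ | ∃ Γ, isWhyNoContingency q Dx Dn t Γ ∧ Γ.card = n} ≤ q.card - 1 ∧
    (1 : ℝ) / (q.card : ℝ) ≤
      1 / (1 + ((sInf {n : ℕ | ∃ Γ, isWhyNoContingency q Dx Dn t Γ ∧ Γ.card = n} : ℕ) : ℝ)) := by
  obtain ⟨Γ, hΓ⟩ := hcause
  obtain ⟨Γ', hΓ', hcard⟩ := hΓ.exists_card_lt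
  set S := {n : ℕ | ∃ Γ, isWhyNoContingency q Dx Dn t Γ ∧ Γ.card = n}
  have hmin : sInf S < q.card :=
    (Nat.sInf_le (show Γ'.card ∈ S from ⟨Γ', hΓ', rfl⟩)).trans_lt hcard
  refine ⟨⟨Γ', hΓ', by omega⟩, by omega, one_div_le_one_div_of_le (by positivity) ?_⟩
  exact_mod_cast Nat.one_add_le_iff.mpr hmin

/-- Let `q` be a Boolean conjunctive query with `m` atoms, `Dˣ` exogenous
tuples with `Dˣ ⊭ q`, and `Dⁿ` candidate missing endogenous tuples with `Dˣ ∪ Dⁿ ⊨ q`.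
If `t ∈ Dⁿ` is an actual Why-No cause for `q`, then there is a contingency set `Γ` for `t`
with `|Γ| ≤ m − 1`; consequently the minimum contingency size for `t` is at most `m − 1`
and the responsibility `1/(1 + min_Γ |Γ|)` of `t` is at least `1/m`. -/
theorem statement3 {Rel Var Const : Type}
    [DecidableEq Rel] [DecidableEq Var] [DecidableEq Const]
    (q : Finset (DBAtom Rel Var)) (Dx Dn : Finset (DBTup Rel Const))
    (hdisj : Disjoint Dx Dn)
    (hx : ¬ dbSat (Const := Const) Dx q) (hD : dbSat (Dx ∪ Dn) q)
    (t : DBTup Rel Const) (ht : t ∈ Dn)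
    (hcause : ∃ Γ, isWhyNoContingency q Dx Dn t Γ) :
    (∃ Γ, isWhyNoContingency q Dx Dn t Γ ∧ Γ.card ≤ q.card - 1) ∧
    sInf {n : ℕ | ∃ Γ, isWhyNoContingency q Dx Dn t Γ ∧ Γ.card = n} ≤ q.card - 1 ∧
    (1 : ℝ) / (q.card : ℝ) ≤
      1 / (1 + ((sInf {n : ℕ | ∃ Γ, isWhyNoContingency q Dx Dn t Γ ∧ Γ.card = n} : ℕ) : ℝ)) :=
  statement3_general q Dx Dn t hcause
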